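/- arXiv:cs/0606109 — 5 statements merged into one kernel-verified Lean document; each statement's English description precedes it below -/
import Mathlib

section
/- There exists a universal constant c > 0 such that for every n ≥ 2 the following holds. Let P_n denote the n-point path, i.e. the set {0, 1, ..., n−1} with metric d(i,j) = |i−j|. Let D be any finitely supported probability distribution over pairs (U, f), where (U, d_U) is a finite ultrametric space and f : P_n → U is non-contractive. Then there exists x ∈ P_n such that the expectation over D of |∇f(x)|_∞ = max_{y ≠ x} d_U(f(x),f(y))/|x−y| is at least c·(log n)². -/
/-- `d` is a metric on `X`. -/
def IsMetric {X : Type*} (d : X → X → ℝ) : Prop :=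
  (∀ x y, 0 ≤ d x y) ∧ (∀ x y, d x y = 0 ↔ x = y) ∧
  (∀ x y, d x y = d y x) ∧ (∀ x y z, d x z ≤ d x y + d y z)

/-- `ρ` is an ultrametric. -/
def IsUltrametric {X : Type*} (ρ : X → X → ℝ) : Prop :=
  ∀ u v w, ρ u v ≤ max (ρ u w) (ρ w v)

/-!
It suffices to show `∑ₓ |∇f(x)|_∞ ≥ c n (log n)²` for a single non-contractive `f` from `P_n` into
an ultrametric and then to average over `D`. For every `s`, a window of `s + 2` consecutive points
contains a step `f(p - 1), f(p)` of length `> s`: otherwise the ultrametric inequality would put the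
ends of the window at distance `≤ s`. By the ultrametric inequality again, `f(x)` is at distance
`> s` from `f(p - 1)` or from `f(p)`, so `|∇f(x)|_∞ ≥ s / (|x - p| + 1)`.

Fix a level `2^σ`. For `i < K`, cut every window of width `4 · 2^σ 16^i` at scale `2^σ 16^i`; on
the interval of length `16^i` starting at each cut the gradient is at least `2^σ / 2`. An interval
of index `i' > i` meets at most about `16^(i'-i) / 2^σ + 2` intervals of index `i`, and there are
`16^(i'-i)` times fewer of them, so as `8K ≤ 2^σ` discarding the intervals that meet one of higher
index loses at most a quarter of each index. Hence the gradient is `≥ 2^σ / 2` on `≳ K n / 2^σ`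
points, and summing over the `K` levels `σ ∈ [K, 2K)`, with `K ≈ log₂ n / 8`, gives
`∑ₓ |∇f(x)|_∞ ≳ K² n`.
-/

open Finset

namespace PathUltrametric

section Ultrametric

variable {X : Type*} {d : X → X → ℝ}

theorem IsUltrametric.le_of_forall_step_le (hd : IsUltrametric d) (g : ℕ → X) {r : ℝ} (a : ℕ) :
    ∀ m, (∀ t ≤ m, d (g (a + t)) (g (a + t + 1)) ≤ r) → d (g a) (g (a + m + 1)) ≤ r
  | 0, h => h 0 le_rfl
  | m + 1, h =>
    (hd _ _ (g (a + m + 1))).trans <| max_le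
      (IsUltrametric.le_of_forall_step_le hd g a m fun t ht => h t (by omega)) (h (m + 1) le_rfl)

theorem IsUltrametric.exists_lt_step (hd : IsUltrametric d) (g : ℕ → X) {r : ℝ} {a m : ℕ}
    (h : r < d (g a) (g (a + m + 1))) : ∃ t ≤ m, r < d (g (a + t)) (g (a + t + 1)) := by
  by_contra! hle
  exact (IsUltrametric.le_of_forall_step_le hd g a m hle).not_gt h

end Ultrametric

theorem abs_natCast_sub_le {x y h : ℕ} (hxy : x ≤ y + h) (hyx : y ≤ x + h) :
    |(x : ℝ) - y| ≤ h := by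
  have h₁ : (x : ℝ) ≤ y + h := by exact_mod_cast hxy
  have h₂ : (y : ℝ) ≤ x + h := by exact_mod_cast hyx
  exact abs_sub_le_iff.mpr ⟨by linarith, by linarith⟩

section Gradient

variable {U : Type*} {d : U → U → ℝ} {n : ℕ} {f : Fin n → U}

noncomputable def maxGradient (d : U → U → ℝ) (f : Fin n → U) (x : Fin n) : ℝ :=
  ⨆ y : {y : Fin n // y ≠ x}, d (f x) (f y.1) / |(x : ℝ) - (y.1 : ℝ)|

theorem div_le_maxGradient {x y : Fin n} (hyx : y ≠ x) :
    d (f x) (f y) / |(x : ℝ) - (y : ℝ)| ≤ maxGradient d f x :=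
  le_ciSup (f := fun y : {y : Fin n // y ≠ x} => d (f x) (f y.1) / |(x : ℝ) - (y.1 : ℝ)|)
    (Set.finite_range _).bddAbove ⟨y, hyx⟩

theorem one_le_maxGradient (hf : ∀ a b : Fin n, |(a : ℝ) - (b : ℝ)| ≤ d (f a) (f b))
    (hn : 2 ≤ n) (x : Fin n) : 1 ≤ maxGradient d f x := by
  obtain ⟨y, hyx⟩ := Fintype.exists_ne_of_one_lt_card (by simp; omega) x
  have hpos : 0 < |(x : ℝ) - (y : ℝ)| :=
    abs_pos.mpr (sub_ne_zero.mpr (by exact_mod_cast Fin.val_ne_of_ne hyx.symm))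
  exact ((one_le_div hpos).mpr (hf x y)).trans (div_le_maxGradient hyx)

theorem div_le_maxGradient_of_lt (hd : IsMetric d) {x y : Fin n} {r : ℝ} {h : ℕ} (hr : 0 ≤ r)
    (hrd : r < d (f x) (f y)) (hxy : |(x : ℝ) - (y : ℝ)| ≤ h + 1) :
    r / (h + 1) ≤ maxGradient d f x := by
  have hyx : y ≠ x := by
    rintro rfl
    exact hrd.not_ge (((hd.2.1 _ _).mpr rfl).le.trans hr)
  have hpos : 0 < |(x : ℝ) - (y : ℝ)| :=
    abs_pos.mpr (sub_ne_zero.mpr (by exact_mod_cast Fin.val_ne_of_ne hyx.symm))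
  exact (div_le_div₀ (hr.trans hrd.le) hrd.le hpos hxy).trans (div_le_maxGradient hyx)

theorem exists_cut (hd : IsMetric d) (hu : IsUltrametric d)
    (hf : ∀ a b : Fin n, |(a : ℝ) - (b : ℝ)| ≤ d (f a) (f b)) {s a : ℕ} (hwin : a + s + 2 ≤ n) :
    ∃ p, a < p ∧ p ≤ a + s + 1 ∧ ∀ (x : Fin n) (h : ℕ), p ≤ x + h → (x : ℕ) ≤ p + h →
      (s : ℝ) / (h + 1) ≤ maxGradient d f x := by
  let g : ℕ → U := fun t => if ht : t < n then f ⟨t, ht⟩ else f ⟨a, by omega⟩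
  have hg : ∀ t (ht : t < n), g t = f ⟨t, ht⟩ := fun t ht => dif_pos ht
  have hfar : (s : ℝ) < d (g a) (g (a + s + 1)) := by
    rw [hg a (by omega), hg _ (by omega)]
    refine lt_of_lt_of_le ?_ (hf _ _)
    rw [abs_sub_comm]
    push_cast
    rw [show (a : ℝ) + s + 1 - a = s + 1 by ring, abs_of_pos (by positivity)]
    linarith
  obtain ⟨t, hts, hstep⟩ := IsUltrametric.exists_lt_step hu g hfar
  refine ⟨a + t + 1, by omega, by omega, fun x h hpx hxp => ?_⟩
  rw [hg _ (by omega), hg _ (by omega)] at hstep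
  rcases lt_max_iff.mp (hstep.trans_le (hu _ _ (f x))) with hlt | hlt
  · rw [hd.2.2.1] at hlt
    have := abs_natCast_sub_le (x := x) (y := a + t) (h := h + 1) (by omega) (by omega)
    exact div_le_maxGradient_of_lt hd (Nat.cast_nonneg s) hlt (by exact_mod_cast this)
  · have := abs_natCast_sub_le (x := x) (y := a + t + 1) (h := h + 1) (by omega) (by omega)
    exact div_le_maxGradient_of_lt hd (Nat.cast_nonneg s) hlt (by exact_mod_cast this)

end Gradient

theorem sum_two_pow_le_two_mul {A : Finset ℕ} {c : ℝ} (hA : ∀ σ ∈ A, (2 : ℝ) ^ σ ≤ c)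
    (hc : 0 ≤ c) : ∑ σ ∈ A, (2 : ℝ) ^ σ ≤ 2 * c := by
  rcases A.eq_empty_or_nonempty with rfl | hne
  · simpa using hc
  have hlt : ∑ σ ∈ A, 2 ^ σ < 2 ^ (A.max' hne + 1) :=
    Nat.geomSum_lt le_rfl fun σ hσ => Nat.lt_succ_of_le (A.le_max' σ hσ)
  calc ∑ σ ∈ A, (2 : ℝ) ^ σ ≤ 2 ^ (A.max' hne + 1) := by exact_mod_cast hlt.le
    _ = 2 * 2 ^ A.max' hne := pow_succ' _ _
    _ ≤ 2 * c := by gcongr; exact hA _ (A.max'_mem hne)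

theorem sum_two_pow_mul_card_le {α : Type*} {s : Finset α} {g : α → ℝ} (hg : ∀ x ∈ s, 0 ≤ g x)
    {S : Finset ℕ} {T : ℕ → Finset α} (hTs : ∀ σ ∈ S, T σ ⊆ s)
    (hTg : ∀ σ ∈ S, ∀ x ∈ T σ, (2 : ℝ) ^ σ ≤ g x) :
    ∑ σ ∈ S, (2 : ℝ) ^ σ * #(T σ) ≤ 2 * ∑ x ∈ s, g x := by
  classical
  calc ∑ σ ∈ S, (2 : ℝ) ^ σ * #(T σ)
      = ∑ σ ∈ S, ∑ x ∈ s, if x ∈ T σ then (2 : ℝ) ^ σ else 0 := sum_congr rfl fun σ hσ => by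
        rw [sum_ite_mem, inter_eq_right.mpr (hTs σ hσ), sum_const, nsmul_eq_mul, mul_comm]
    _ = ∑ x ∈ s, ∑ σ ∈ S with x ∈ T σ, (2 : ℝ) ^ σ := by
        rw [sum_comm]
        simp_rw [sum_filter]
    _ ≤ ∑ x ∈ s, 2 * g x := sum_le_sum fun x hx => sum_two_pow_le_two_mul
        (fun σ hσ => hTg σ (mem_filter.mp hσ).1 x (mem_filter.mp hσ).2) (hg x hx)
    _ = 2 * ∑ x ∈ s, g x := (mul_sum _ _ _).symm

theorem card_filter_near_le {W s D y M : ℕ} (c : ℕ → ℕ) (hW : 0 < W)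
    (hc : ∀ j < M, j * W < c j ∧ c j ≤ j * W + s) :
    #{j ∈ range M | c j ≤ y + D ∧ y ≤ c j + D} ≤ (2 * D + s) / W + 2 := by
  have hsub : {j ∈ range M | c j ≤ y + D ∧ y ≤ c j + D} ⊆
      Icc ((y - D - s) / W) ((y + D) / W) := by
    intro j hj
    obtain ⟨hjM, hy₁, hy₂⟩ := mem_filter.mp hj
    obtain ⟨hc₁, hc₂⟩ := hc j (mem_range.mp hjM)
    exact mem_Icc.mpr ⟨Nat.div_le_of_le_mul (by rw [mul_comm]; omega),
      (Nat.le_div_iff_mul_le hW).mpr (by omega)⟩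
  have hspan : (y + D) / W ≤ (y - D - s) / W + (2 * D + s) / W + 1 :=
    (Nat.div_le_div_right (by omega)).trans (Nat.add_div_le_div_add_div_add_one _ _ _)
  have hcard := card_le_card hsub
  rw [Nat.card_Icc] at hcard
  exact hcard.trans (Nat.sub_le_iff_le_add.mpr (by linarith))

theorem sum_inv_sixteen_pow_Ioo_le {i J : ℕ} :
    ∑ i' ∈ Ioo i J, (16⁻¹ : ℝ) ^ i' ≤ (16⁻¹ : ℝ) ^ i / 15 := by
  rw [← Ico_add_one_left_eq_Ioo]
  refine (geom_sum_Ico_le_of_lt_one (by norm_num) (by norm_num)).trans (le_of_eq ?_)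
  rw [pow_succ]
  ring

/-- `q s a` is a point of `(a, a + s + 1]` near which `G` is at least `s / (distance + 1)`;
for the gradient of a non-contractive map into an ultrametric it is the end of a long step
(`exists_cut`). -/
def IsCutMap (n : ℕ) (G : ℕ → ℝ) (q : ℕ → ℕ → ℕ) : Prop :=
  ∀ s a, a + s + 2 ≤ n → a < q s a ∧ q s a ≤ a + s + 1 ∧
    ∀ x h, x < n → q s a ≤ x + h → x ≤ q s a + h → (s : ℝ) / (h + 1) ≤ G x

/- Level `i` consists of the windows `[j W, (j + 1) W)` with `W = 4 * scale σ i`, each cut at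
scale `scale σ i` by `center`, and of the intervals `ball` of length `16 ^ i` starting at the cuts.
A ball survives if it misses every ball of a higher level below `J`. -/
def scale (σ i : ℕ) : ℕ := 2 ^ σ * 16 ^ i

def center (q : ℕ → ℕ → ℕ) (σ i j : ℕ) : ℕ := q (scale σ i) (j * (4 * scale σ i))

def ball (q : ℕ → ℕ → ℕ) (σ i j : ℕ) : Finset ℕ := Icc (center q σ i j) (center q σ i j + 16 ^ i)

def survivors (n : ℕ) (q : ℕ → ℕ → ℕ) (σ J i : ℕ) : Finset ℕ :=
  {j ∈ range (n / (4 * scale σ i)) | ∀ i' ∈ Ioo i J, ∀ j' < n / (4 * scale σ i'),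
    Disjoint (ball q σ i j) (ball q σ i' j')}

def layer (n : ℕ) (q : ℕ → ℕ → ℕ) (σ J i : ℕ) : Finset ℕ :=
  (survivors n q σ J i).biUnion (ball q σ i)

def packing (n : ℕ) (q : ℕ → ℕ → ℕ) (σ J : ℕ) : Finset ℕ := (range J).biUnion (layer n q σ J)

section Packing

variable {n : ℕ} {G : ℕ → ℝ} {q : ℕ → ℕ → ℕ} {σ J i j : ℕ}

theorem pow_sixteen_le_scale : 16 ^ i ≤ scale σ i :=
  Nat.le_mul_of_pos_left _ (by positivity)

theorem scale_pos : 0 < scale σ i := by unfold scale; positivity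

theorem cast_scale : (scale σ i : ℝ) = 2 ^ σ * 16 ^ i := by push_cast [scale]; rfl

theorem center_spec (hq : IsCutMap n G q) (hj : j < n / (4 * scale σ i)) :
    j * (4 * scale σ i) < center q σ i j ∧ center q σ i j ≤ j * (4 * scale σ i) + scale σ i + 1 ∧
      j * (4 * scale σ i) + 4 * scale σ i ≤ n ∧
      ∀ x h, x < n → center q σ i j ≤ x + h → x ≤ center q σ i j + h →
        (scale σ i : ℝ) / (h + 1) ≤ G x := by
  have hs := @scale_pos σ i
  have hfit : (j + 1) * (4 * scale σ i) ≤ n := (Nat.le_div_iff_mul_le (by omega)).mp hj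
  rw [add_one_mul] at hfit
  obtain ⟨h₁, h₂, h₃⟩ := hq (scale σ i) (j * (4 * scale σ i)) (by omega)
  exact ⟨h₁, h₂, hfit, h₃⟩

theorem ball_subset_range (hq : IsCutMap n G q) (hj : j < n / (4 * scale σ i)) :
    ball q σ i j ⊆ range n := by
  obtain ⟨-, h₂, h₃, -⟩ := center_spec hq hj
  have := @pow_sixteen_le_scale σ i
  have := @scale_pos σ i
  intro x hx
  rw [ball, mem_Icc] at hx
  rw [mem_range]
  omega

theorem le_of_mem_ball (hq : IsCutMap n G q) (hj : j < n / (4 * scale σ i)) {x : ℕ}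
    (hx : x ∈ ball q σ i j) : (2 : ℝ) ^ σ ≤ 2 * G x := by
  obtain ⟨-, -, -, hG⟩ := center_spec hq hj
  have hxn := ball_subset_range hq hj hx
  rw [ball, mem_Icc] at hx
  rw [mem_range] at hxn
  have key := hG x (16 ^ i) hxn (by omega) (by omega)
  have h16 : (1 : ℝ) ≤ 16 ^ i := one_le_pow₀ (by norm_num)
  rw [cast_scale, div_le_iff₀ (by positivity)] at key
  push_cast at key
  nlinarith [pow_pos (two_pos : (0 : ℝ) < 2) σ]

theorem disjoint_ball (hq : IsCutMap n G q) {j' : ℕ} (hj' : j' < n / (4 * scale σ i))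
    (hjj' : j < j') : Disjoint (ball q σ i j) (ball q σ i j') := by
  obtain ⟨-, h₂, -, -⟩ := center_spec hq (hjj'.trans hj')
  obtain ⟨h₁', -, -, -⟩ := center_spec hq hj'
  have : (j + 1) * (4 * scale σ i) ≤ j' * (4 * scale σ i) := Nat.mul_le_mul_right _ hjj'
  rw [add_one_mul] at this
  have := @pow_sixteen_le_scale σ i
  have := @scale_pos σ i
  rw [ball, ball, disjoint_left]
  intro x hx hx'
  rw [mem_Icc] at hx hx'
  omega

theorem card_layer (hq : IsCutMap n G q) :
    #(layer n q σ J i) = #(survivors n q σ J i) * (16 ^ i + 1) := by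
  rw [layer, card_biUnion (fun j hj j' hj' hne => ?_)]
  · exact sum_const_nat fun j _ => by
      rw [ball, Nat.card_Icc, add_assoc, Nat.add_sub_cancel_left]
  have hj := (mem_filter.mp hj).1
  have hj' := (mem_filter.mp hj').1
  rw [mem_range] at hj hj'
  rcases hne.lt_or_gt with h | h
  · exact disjoint_ball hq hj' h
  · exact (disjoint_ball hq hj h).symm

theorem disjoint_layer {i' : ℕ} (hii' : i < i') (hi'J : i' < J) :
    Disjoint (layer n q σ J i) (layer n q σ J i') := by
  rw [layer, layer, disjoint_biUnion_left]
  intro j hj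
  rw [disjoint_biUnion_right]
  intro j' hj'
  exact (mem_filter.mp hj).2 i' (mem_Ioo.mpr ⟨hii', hi'J⟩) j'
    (mem_range.mp (mem_filter.mp hj').1)

theorem exists_near_of_not_mem_survivors (hj : j ∈ range (n / (4 * scale σ i)))
    (hjs : j ∉ survivors n q σ J i) :
    ∃ i' ∈ Ioo i J, ∃ j' < n / (4 * scale σ i'),
      center q σ i j ≤ center q σ i' j' + 16 ^ i' ∧
        center q σ i' j' ≤ center q σ i j + 16 ^ i' := by
  simp only [survivors, mem_filter, hj, true_and, not_forall, not_disjoint_iff] at hjs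
  obtain ⟨i', hi', j', hj', x, hx, hx'⟩ := hjs
  have : 16 ^ i ≤ 16 ^ i' := Nat.pow_le_pow_right (by norm_num) (mem_Ioo.mp hi').1.le
  rw [ball, mem_Icc] at hx hx'
  exact ⟨i', hi', j', hj', by omega, by omega⟩

theorem card_sub_card_survivors_le (hq : IsCutMap n G q) :
    n / (4 * scale σ i) - #(survivors n q σ J i) ≤ ∑ i' ∈ Ioo i J,
      n / (4 * scale σ i') * ((2 * 16 ^ i' + (scale σ i + 1)) / (4 * scale σ i) + 2) := by
  set M := n / (4 * scale σ i)
  have hsub : range M \ survivors n q σ J i ⊆ (Ioo i J).biUnion fun i' =>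
      (range (n / (4 * scale σ i'))).biUnion fun j' =>
        {j ∈ range M | center q σ i j ≤ center q σ i' j' + 16 ^ i' ∧
          center q σ i' j' ≤ center q σ i j + 16 ^ i'} := by
    intro j hj
    obtain ⟨hjM, hjs⟩ := mem_sdiff.mp hj
    obtain ⟨i', hi', j', hj', hnear⟩ := exists_near_of_not_mem_survivors hjM hjs
    simp only [mem_biUnion, mem_filter, mem_range]
    exact ⟨i', hi', j', hj', mem_range.mp hjM, hnear⟩
  have hc : ∀ j < M, j * (4 * scale σ i) < center q σ i j ∧
      center q σ i j ≤ j * (4 * scale σ i) + (scale σ i + 1) := fun j hj =>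
    ⟨(center_spec hq hj).1, (center_spec hq hj).2.1⟩
  have hsurv : survivors n q σ J i ⊆ range M := filter_subset _ _
  rw [← card_range M, ← card_sdiff_of_subset hsurv]
  refine (card_le_card hsub).trans <| card_biUnion_le.trans <| sum_le_sum fun i' _ => ?_
  calc _ ≤ _ := card_biUnion_le
    _ ≤ ∑ _j' ∈ range (n / (4 * scale σ i')),
          ((2 * 16 ^ i' + (scale σ i + 1)) / (4 * scale σ i) + 2) :=
      sum_le_sum fun j' _ => card_filter_near_le _ (by have := @scale_pos σ i; omega) hc
    _ = _ := by rw [sum_const, card_range, smul_eq_mul]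

theorem cast_killed_term_le {i' : ℕ} :
    ((n / (4 * scale σ i') * ((2 * 16 ^ i' + (scale σ i + 1)) / (4 * scale σ i) + 2) : ℕ) : ℝ) ≤
      n / (4 * scale σ i) / (2 * 2 ^ σ) + 5 / 2 * (n / (4 * scale σ i)) * 16 ^ i * 16⁻¹ ^ i' := by
  have hs : (1 : ℝ) ≤ scale σ i := by exact_mod_cast @scale_pos σ i
  have hM : ((n / (4 * scale σ i') : ℕ) : ℝ) ≤ n / (4 * (2 ^ σ * 16 ^ i')) := by
    simpa [cast_scale] using Nat.cast_div_le (α := ℝ) (m := n) (n := 4 * scale σ i')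
  have hB : (((2 * 16 ^ i' + (scale σ i + 1)) / (4 * scale σ i) : ℕ) : ℝ) ≤
      2 * 16 ^ i' / (4 * scale σ i) + 1 / 2 := by
    refine Nat.cast_div_le.trans ?_
    rw [div_le_iff₀ (Nat.cast_pos.mpr (by have := @scale_pos σ i; omega))]
    push_cast
    rw [add_mul, div_mul_cancel₀ _ (by positivity)]
    linarith
  push_cast
  calc _ ≤ (n / (4 * (2 ^ σ * 16 ^ i')) : ℝ) * (2 * 16 ^ i' / (4 * scale σ i) + 1 / 2 + 2) := by
        gcongr
    _ = _ := by
        rw [cast_scale, inv_pow]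
        field_simp
        ring

theorem cast_sum_killed_le (hJ : 8 * J ≤ 2 ^ σ) :
    ((∑ i' ∈ Ioo i J,
      n / (4 * scale σ i') * ((2 * 16 ^ i' + (scale σ i + 1)) / (4 * scale σ i) + 2) : ℕ) : ℝ) ≤
      n / (4 * scale σ i) / 4 := by
  set X : ℝ := n / (4 * scale σ i)
  have hX : 0 ≤ X := by positivity
  have hJR : (8 : ℝ) * J ≤ 2 ^ σ := by exact_mod_cast hJ
  have hcard : (#(Ioo i J) : ℝ) ≤ J := by
    rw [Nat.card_Ioo]; exact_mod_cast Nat.sub_le_of_le_add (by omega)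
  have hgeom : (16 : ℝ) ^ i * (16⁻¹ ^ i / 15) = 1 / 15 := by
    rw [inv_pow]; field_simp
  rw [Nat.cast_sum]
  calc _ ≤ ∑ i' ∈ Ioo i J, (X / (2 * 2 ^ σ) + 5 / 2 * X * 16 ^ i * 16⁻¹ ^ i') :=
        sum_le_sum fun i' _ => cast_killed_term_le
    _ = #(Ioo i J) * (X / (2 * 2 ^ σ)) +
          5 / 2 * X * 16 ^ i * ∑ i' ∈ Ioo i J, (16⁻¹ : ℝ) ^ i' := by
        rw [sum_add_distrib, sum_const, nsmul_eq_mul, mul_sum]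
    _ ≤ J * (X / (2 * 2 ^ σ)) + 5 / 2 * X * 16 ^ i * (16⁻¹ ^ i / 15) := by
        gcongr
        exact sum_inv_sixteen_pow_Ioo_le
    _ = J * X / (2 * 2 ^ σ) + 5 / 2 * X * (16 ^ i * (16⁻¹ ^ i / 15)) := by ring
    _ ≤ X / 4 := by
        have hJX : J * X / (2 * 2 ^ σ) ≤ X / 16 := by
          rw [div_le_div_iff₀ (by positivity) (by norm_num)]
          nlinarith
        rw [hgeom]
        linarith

theorem card_survivors_ge (hq : IsCutMap n G q) (hJ : 8 * J ≤ 2 ^ σ) (hn : 16 * scale σ i ≤ n) :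
    (n : ℝ) / (4 * scale σ i) / 2 ≤ #(survivors n q σ J i) := by
  have hW : 0 < 4 * scale σ i := by have := @scale_pos σ i; omega
  have hWR : (0 : ℝ) < 4 * scale σ i := by exact_mod_cast hW
  have hX : (4 : ℝ) ≤ n / (4 * scale σ i) := by
    rw [le_div_iff₀ hWR]; exact_mod_cast (by omega : 4 * (4 * scale σ i) ≤ n)
  have hM : (n : ℝ) / (4 * scale σ i) < (n / (4 * scale σ i) : ℕ) + 1 := by
    have h := (Nat.cast_lt (α := ℝ)).mpr (Nat.lt_div_mul_add (a := n) hW)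
    push_cast at h
    rw [div_lt_iff₀ hWR]
    linarith
  have hkill : ((n / (4 * scale σ i) - #(survivors n q σ J i) : ℕ) : ℝ) ≤
      n / (4 * scale σ i) / 4 :=
    (Nat.cast_le.mpr (card_sub_card_survivors_le hq)).trans (cast_sum_killed_le hJ)
  have hle : ((n / (4 * scale σ i) : ℕ) : ℝ) ≤
      ((n / (4 * scale σ i) - #(survivors n q σ J i) : ℕ) : ℝ) + #(survivors n q σ J i) := by
    exact_mod_cast le_tsub_add
  linarith

theorem card_layer_ge (hq : IsCutMap n G q) (hJ : 8 * J ≤ 2 ^ σ) (hn : 16 * scale σ i ≤ n) :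
    (n : ℝ) / (8 * 2 ^ σ) ≤ #(layer n q σ J i) := by
  rw [card_layer hq, Nat.cast_mul]
  calc (n : ℝ) / (8 * 2 ^ σ) = n / (4 * scale σ i) / 2 * 16 ^ i := by
        rw [cast_scale]; field_simp; ring
    _ ≤ #(survivors n q σ J i) * ((16 ^ i + 1 : ℕ) : ℝ) := by
        gcongr
        · exact card_survivors_ge hq hJ hn
        · push_cast; linarith

theorem exists_ball_of_mem_packing {x : ℕ} (hx : x ∈ packing n q σ J) :
    ∃ i j, j < n / (4 * scale σ i) ∧ x ∈ ball q σ i j := by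
  simp only [packing, layer, survivors, mem_biUnion, mem_filter, mem_range] at hx
  obtain ⟨i, -, j, ⟨hj, -⟩, hx⟩ := hx
  exact ⟨i, j, hj, hx⟩

theorem packing_subset_range (hq : IsCutMap n G q) : packing n q σ J ⊆ range n := fun x hx => by
  obtain ⟨i, j, hj, hx⟩ := exists_ball_of_mem_packing hx
  exact ball_subset_range hq hj hx

theorem le_of_mem_packing (hq : IsCutMap n G q) {x : ℕ} (hx : x ∈ packing n q σ J) :
    (2 : ℝ) ^ σ ≤ 2 * G x := by
  obtain ⟨i, j, hj, hx⟩ := exists_ball_of_mem_packing hx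
  exact le_of_mem_ball hq hj hx

theorem card_packing_ge (hq : IsCutMap n G q) (hJ : 8 * J ≤ 2 ^ σ)
    (hn : ∀ i < J, 16 * scale σ i ≤ n) : (J : ℝ) * n / 8 ≤ 2 ^ σ * #(packing n q σ J) := by
  have hcard : #(packing n q σ J) = ∑ i ∈ range J, #(layer n q σ J i) := by
    refine card_biUnion fun i hi i' hi' hne => ?_
    rw [coe_range, Set.mem_Iio] at hi hi'
    rcases hne.lt_or_gt with h | h
    · exact disjoint_layer h hi'
    · exact (disjoint_layer h hi).symm
  calc (J : ℝ) * n / 8 = 2 ^ σ * ∑ _i ∈ range J, (n : ℝ) / (8 * 2 ^ σ) := by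
        rw [sum_const, card_range, nsmul_eq_mul]; field_simp
    _ ≤ 2 ^ σ * #(packing n q σ J) := by
        rw [hcard, Nat.cast_sum]
        gcongr with i hi
        exact card_layer_ge hq hJ (hn i (mem_range.mp hi))

end Packing

theorem sixteen_mul_scale_le {n σ i : ℕ} (hn : n ≠ 0) (h : σ + 4 * i + 4 ≤ Nat.log 2 n) :
    16 * scale σ i ≤ n := by
  have : 16 * scale σ i = 2 ^ (σ + 4 * i + 4) := by
    rw [scale, pow_add, pow_add, pow_mul]; ring
  rw [this]
  exact (Nat.pow_le_pow_right two_pos h).trans (Nat.pow_log_le_self 2 hn)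

theorem eight_mul_le_two_pow {K : ℕ} (hK : 6 ≤ K) : 8 * K ≤ 2 ^ K := by
  induction K, hK using Nat.le_induction with
  | base => norm_num
  | succ K hK ih => rw [pow_succ]; omega

theorem log_lt_of_natLog (n : ℕ) : Real.log n < 7 / 10 * (Nat.log 2 n + 1) := by
  rcases Nat.eq_zero_or_pos n with rfl | hn
  · norm_num
  have hlt : (n : ℝ) < 2 ^ (Nat.log 2 n + 1) := by
    exact_mod_cast Nat.lt_pow_succ_log_self one_lt_two n
  have := Real.log_lt_log (by positivity) hlt
  rw [Real.log_pow] at this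
  push_cast at this
  nlinarith [Real.log_two_lt_d9, (by positivity : (0 : ℝ) < Nat.log 2 n + 1)]

theorem log_sq_mul_le_sum {n : ℕ} {G : ℕ → ℝ} {q : ℕ → ℕ → ℕ} (hG : ∀ x < n, 1 ≤ G x)
    (hq : IsCutMap n G q) : Real.log n ^ 2 / 4096 * n ≤ ∑ x ∈ range n, G x := by
  have hlog := Real.log_natCast_nonneg n
  have hsum : (n : ℝ) ≤ ∑ x ∈ range n, G x := by
    simpa using card_nsmul_le_sum (range n) G 1 fun x hx => hG x (mem_range.mp hx)
  by_cases hsmall : Real.log n ≤ 64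
  · have : Real.log n ^ 2 / 4096 ≤ 1 := by nlinarith
    nlinarith [(n.cast_nonneg : (0 : ℝ) ≤ n)]
  push Not at hsmall
  set K := Nat.log 2 n / 8
  have hn : n ≠ 0 := by rintro rfl; simp at hsmall; linarith
  have hLK : Nat.log 2 n + 1 ≤ 8 * K + 8 := by omega
  have hLK' : (Nat.log 2 n : ℝ) + 1 ≤ 8 * K + 8 := by exact_mod_cast hLK
  have hlogL := log_lt_of_natLog n
  have hK : 10 < K := by exact_mod_cast (by linarith : (10 : ℝ) < K)
  have hlogK : Real.log n ≤ 8 * K := by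
    have : (10 : ℝ) < K := by exact_mod_cast hK
    linarith
  have hpack : ∀ σ ∈ Ico K (2 * K), (K : ℝ) * n / 8 ≤ 2 ^ σ * #(packing n q σ K) := by
    intro σ hσ
    rw [mem_Ico] at hσ
    refine card_packing_ge hq ((eight_mul_le_two_pow (by omega)).trans
      (Nat.pow_le_pow_right two_pos hσ.1)) fun i hi => sixteen_mul_scale_le hn (by omega)
  have hcake := sum_two_pow_mul_card_le (g := fun x => 2 * G x) (S := Ico K (2 * K))
    (T := fun σ => packing n q σ K) (fun x hx => by linarith [hG x (mem_range.mp hx)])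
    (fun σ _ => packing_subset_range hq) (fun σ _ x hx => le_of_mem_packing hq hx)
  have hK2 : (K : ℝ) * K * n / 8 ≤ 4 * ∑ x ∈ range n, G x := by
    calc (K : ℝ) * K * n / 8 = ∑ σ ∈ Ico K (2 * K), (K : ℝ) * n / 8 := by
          rw [sum_const, Nat.card_Ico, nsmul_eq_mul]; push_cast [show 2 * K - K = K by omega]; ring
      _ ≤ _ := sum_le_sum hpack
      _ ≤ _ := hcake
      _ = _ := by rw [← mul_sum]; ring
  have hsq : Real.log n ^ 2 ≤ 64 * K ^ 2 := by nlinarith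
  calc Real.log n ^ 2 / 4096 * n ≤ 64 * K ^ 2 / 4096 * n := by gcongr
    _ ≤ ∑ x ∈ range n, G x := by nlinarith [(n.cast_nonneg : (0 : ℝ) ≤ n)]

theorem log_sq_mul_le_sum_maxGradient {U : Type*} {d : U → U → ℝ} {n : ℕ} {f : Fin n → U}
    (hn : 2 ≤ n) (hd : IsMetric d) (hu : IsUltrametric d)
    (hf : ∀ a b : Fin n, |(a : ℝ) - (b : ℝ)| ≤ d (f a) (f b)) :
    Real.log n ^ 2 / 4096 * n ≤ ∑ x, maxGradient d f x := by
  let G : ℕ → ℝ := fun t => if ht : t < n then maxGradient d f ⟨t, ht⟩ else 0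
  have hG : ∀ t (ht : t < n), G t = maxGradient d f ⟨t, ht⟩ := fun t ht => dif_pos ht
  have hcut : ∀ s a, ∃ p, a + s + 2 ≤ n → a < p ∧ p ≤ a + s + 1 ∧
      ∀ x h, x < n → p ≤ x + h → x ≤ p + h → (s : ℝ) / (h + 1) ≤ G x := by
    intro s a
    by_cases hwin : a + s + 2 ≤ n
    · obtain ⟨p, hap, hpa, hp⟩ := exists_cut hd hu hf hwin
      refine ⟨p, fun _ => ⟨hap, hpa, fun x h hx h₁ h₂ => ?_⟩⟩
      rw [hG x hx]
      exact hp ⟨x, hx⟩ h h₁ h₂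
    · exact ⟨0, fun h => absurd h hwin⟩
  choose q hq using hcut
  have hG1 : ∀ x < n, 1 ≤ G x := fun x hx => by
    rw [hG x hx]; exact one_le_maxGradient hf hn _
  calc Real.log n ^ 2 / 4096 * n ≤ ∑ t ∈ range n, G t := log_sq_mul_le_sum hG1 hq
    _ = ∑ x : Fin n, maxGradient d f x := by
      rw [← Fin.sum_univ_eq_sum_range]
      exact sum_congr rfl fun x _ => hG x x.isLt

end PathUltrametric

/-- There is a universal `c > 0` such that for every `n ≥ 2` and every finitely supported
distribution over non-contractive embeddings of the path `{0,…,n−1}` (with metric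
`|i−j|`) into finite ultrametric spaces, some point has expected maximum gradient at
least `c (log n)²`. -/
theorem path_ultrametric_max_gradient_lower_bound :
    ∃ c : ℝ, 0 < c ∧
      ∀ (n : ℕ), 2 ≤ n →
        ∀ (m : ℕ) (w : Fin m → ℝ) (U : Fin m → Type)
          (dU : ∀ i, U i → U i → ℝ) (f : ∀ i, Fin n → U i),
          (∀ i, 0 ≤ w i) → (∑ i, w i = 1) →
          (∀ i, w i ≠ 0 →
            Finite (U i) ∧ IsMetric (dU i) ∧ IsUltrametric (dU i) ∧
            ∀ a b : Fin n, |(a : ℝ) - (b : ℝ)| ≤ dU i (f i a) (f i b)) →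
          ∃ x : Fin n,
            c * (Real.log n) ^ 2 ≤
              ∑ i, w i * (⨆ y : {y : Fin n // y ≠ x},
                dU i (f i x) (f i y.1) / |(x : ℝ) - (y.1 : ℝ)|) := by
  refine ⟨1 / 4096, by norm_num, fun n hn m w U dU f hw hw1 hmap => ?_⟩
  have hbound : ∀ i, w i * (Real.log n ^ 2 / 4096 * n) ≤
      w i * ∑ x, PathUltrametric.maxGradient (dU i) (f i) x := fun i => by
    by_cases hwi : w i = 0
    · simp [hwi]
    obtain ⟨-, hd, hu, hf⟩ := hmap i hwi
    exact mul_le_mul_of_nonneg_left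
      (PathUltrametric.log_sq_mul_le_sum_maxGradient hn hd hu hf) (hw i)
  have hsum : ∑ _x : Fin n, 1 / 4096 * Real.log n ^ 2 ≤
      ∑ x : Fin n, ∑ i, w i * PathUltrametric.maxGradient (dU i) (f i) x :=
    calc ∑ _x : Fin n, 1 / 4096 * Real.log n ^ 2 = ∑ i, w i * (Real.log n ^ 2 / 4096 * n) := by
          rw [sum_const, card_univ, Fintype.card_fin, nsmul_eq_mul, ← sum_mul, hw1]; ring
      _ ≤ ∑ i, w i * ∑ x, PathUltrametric.maxGradient (dU i) (f i) x :=
          sum_le_sum fun i _ => hbound i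
      _ = _ := by simp_rw [mul_sum]; exact sum_comm
  obtain ⟨x, -, hx⟩ := exists_le_of_sum_le (univ_nonempty_iff.mpr ⟨⟨0, by omega⟩⟩) hsum
  exact ⟨x, hx⟩
end

section
/- There exists a universal constant c > 0 such that for every n ≥ 2: if (U, d_U) is a finite ultrametric space and f : {0, 1, ..., n−1} → U is non-contractive with respect to the metric d(i,j) = |i−j|, then (1/n)·Σ_{x=0}^{n−1} |∇f(x)|_∞ ≥ c·(log n)², where |∇f(x)|_∞ = max_{y ≠ x} d_U(f(x),f(y))/|x−y|. -/
/-!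
Let `r = n - 1 ≤ d(f 0, f (n - 1))`. In an ultrametric, every point outside a ball of radius `r`
is at distance `≥ r` from every point inside it, so the first index `a` at which the path leaves
the ball of radius `r` about `f 0` is a cut: the point `k` steps away from it on either side
(`a - 1 - k` or `a + k`) has gradient `≥ r / (k + 1)`. The `s = min(L, ⌊√n⌋)` points nearest the
cut on a side of length `L` thus contribute `≥ (n - 1) log (s + 1)` by the harmonic bound, which is
of order `n log n` when `s = ⌊√n⌋`, and the remaining end segment of length `L - s` is handled by
induction: trading `L log² n` for `(L - s) log² (L - s)` costs only `O(n log n)`.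
-/

open Real Finset

lemma log_le_two_mul_sqrt {x : ℝ} (hx : 0 ≤ x) : log x ≤ 2 * √x := by
  have h := log_le_rpow_div hx (by norm_num : (0:ℝ) < 1 / 2)
  rwa [← sqrt_eq_rpow, div_eq_mul_inv, mul_comm, show (1 / 2 : ℝ)⁻¹ = 2 by norm_num] at h

lemma log_sq_le_sixteen_mul_sqrt {x : ℝ} (hx : 1 ≤ x) : log x ^ 2 ≤ 16 * √x := by
  have hlog : log x ≤ 4 * √(√x) := by
    have h := log_le_two_mul_sqrt (sqrt_nonneg x)
    rw [log_sqrt (by linarith)] at h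
    linarith
  have h0 : 0 ≤ log x := log_nonneg hx
  calc log x ^ 2 ≤ (4 * √(√x)) ^ 2 := pow_le_pow_left₀ h0 hlog 2
    _ = 16 * √x := by rw [mul_pow, sq_sqrt (sqrt_nonneg x)]; norm_num

lemma mul_log_sq_le {N s : ℝ} (hN : 2 ≤ N) (hs : 1 ≤ s) (hsN : s ≤ √N) :
    s * log N ^ 2 ≤ 48 * (N - 1) * log (s + 1) := by
  have hlog2 : 2 / 3 ≤ log (s + 1) :=
    (log_two_gt_d9.trans_le (log_le_log (by norm_num) (by linarith))).le.trans' (by norm_num)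
  have hsq : s * √N ≤ N := by
    nlinarith [mul_self_sqrt (by linarith : (0:ℝ) ≤ N), sqrt_nonneg N]
  calc s * log N ^ 2 ≤ s * (16 * √N) :=
        mul_le_mul_of_nonneg_left (log_sq_le_sixteen_mul_sqrt (by linarith)) (by linarith)
    _ ≤ 48 * (N - 1) * (2 / 3) := by nlinarith
    _ ≤ 48 * (N - 1) * log (s + 1) := mul_le_mul_of_nonneg_left hlog2 (by linarith)

lemma mul_sub_log_sq_le {N t : ℝ} (ht : 1 ≤ t) (htN : t ≤ N) :
    t * (log N ^ 2 - log t ^ 2) ≤ 2 * N * log N := by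
  have ht0 : 0 < t := by linarith
  have hratio : t * (log N - log t) ≤ N := by
    have h := log_le_sub_one_of_pos (div_pos (ht0.trans_le htN) ht0)
    rw [log_div (by linarith) ht0.ne'] at h
    have := mul_le_mul_of_nonneg_left h ht0.le
    have e : t * (N / t - 1) = N - t := by field_simp
    linarith
  have hlogt : 0 ≤ log t := log_nonneg ht
  have hlogtN : log t ≤ log N := log_le_log ht0 htN
  nlinarith [mul_le_mul_of_nonneg_right hratio (by linarith : 0 ≤ log N + log t)]

/-- `s` is the number of points next to a cut charged to the harmonic bound, `t` the length of the
segment left to the induction. -/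
lemma exists_add_eq_mul_log_sq_le {n L : ℕ} (hn : 2 ≤ n) (hL : 1 ≤ L) (hLn : L ≤ n) :
    ∃ s t : ℕ, s + t = L ∧
      L * log n ^ 2 / 64 ≤ (n - 1) * log (s + 1) + t * log t ^ 2 / 64 := by
  have hnR : (2 : ℝ) ≤ n := by exact_mod_cast hn
  have hlog0 : ∀ s : ℕ, 0 ≤ log ((s : ℝ) + 1) := fun s => log_nonneg (by simp)
  rcases le_or_gt L (Nat.sqrt n) with hLs | hLs
  · refine ⟨L, 0, rfl, ?_⟩
    have := mul_log_sq_le hnR (by exact_mod_cast hL)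
      ((Nat.cast_le.mpr hLs).trans Real.nat_sqrt_le_real_sqrt)
    nlinarith [hlog0 L]
  · set s := Nat.sqrt n
    refine ⟨s, L - s, by omega, ?_⟩
    have hs1 : 1 ≤ s := Nat.sqrt_pos.mpr (by omega)
    have ht : ((L - s : ℕ) : ℝ) = L - s := by push_cast [hLs.le]; ring
    have hsmall := mul_log_sq_le hnR (by exact_mod_cast hs1) Real.nat_sqrt_le_real_sqrt
    have hbig := mul_sub_log_sq_le (N := n) (t := ((L - s : ℕ) : ℝ))
      (by exact_mod_cast (show 1 ≤ L - s by omega))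
      (by exact_mod_cast (show L - s ≤ n by omega))
    have hlog : log n ≤ 2 * log (s + 1) := by
      have h := log_le_log (sqrt_pos.mpr (by linarith : (0 : ℝ) < n))
        Real.real_sqrt_le_nat_sqrt_succ
      rw [log_sqrt (by linarith)] at h
      linarith
    have hlogn : 0 ≤ log n := log_nonneg (by linarith)
    have : n * log n ≤ 2 * (n - 1) * (2 * log (s + 1)) :=
      mul_le_mul (by linarith) hlog hlogn (by linarith)
    rw [ht] at hbig ⊢
    nlinarith [hlog0 s]

lemma mul_log_add_one_le_sum_range {g : ℕ → ℝ} {r : ℝ} {s : ℕ} (hr : 0 ≤ r)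
    (h : ∀ k < s, r / (k + 1) ≤ g k) : r * log (s + 1) ≤ ∑ k ∈ range s, g k := by
  have hH : (harmonic s : ℝ) = ∑ k ∈ range s, 1 / ((k : ℝ) + 1) := by
    simp [harmonic]
  calc r * log (s + 1) ≤ r * harmonic s := by
        exact_mod_cast mul_le_mul_of_nonneg_left (log_add_one_le_harmonic s) hr
    _ = ∑ k ∈ range s, r / (k + 1) := by simp [hH, mul_sum, div_eq_mul_inv]
    _ ≤ ∑ k ∈ range s, g k := sum_le_sum fun k hk => h k (mem_range.mp hk)

lemma mul_log_add_one_le_sum_Ico_left {G : ℕ → ℝ} {r : ℝ} {b s : ℕ} (hr : 0 ≤ r)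
    (h : ∀ k < s, r / (k + 1) ≤ G (b + s - 1 - k)) :
    r * log (s + 1) ≤ ∑ x ∈ Ico b (b + s), G x := by
  rw [sum_Ico_eq_sum_range, Nat.add_sub_cancel_left, ← sum_range_reflect]
  refine mul_log_add_one_le_sum_range hr fun k hk => ?_
  rw [show b + (s - 1 - k) = b + s - 1 - k by omega]
  exact h k hk

lemma mul_log_add_one_le_sum_Ico_right {G : ℕ → ℝ} {r : ℝ} {a s : ℕ} (hr : 0 ≤ r)
    (h : ∀ k < s, r / (k + 1) ≤ G (a + k)) :
    r * log (s + 1) ≤ ∑ x ∈ Ico a (a + s), G x := by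
  rw [sum_Ico_eq_sum_range, Nat.add_sub_cancel_left]
  exact mul_log_add_one_le_sum_range hr h

lemma IsUltrametric.le_of_lt_of_le {X : Type*} {ρ : X → X → ℝ} (hult : IsUltrametric ρ)
    (hsymm : ∀ u v, ρ u v = ρ v u) {u v w : X} {r : ℝ} (hu : ρ u w < r) (hv : r ≤ ρ v w) :
    r ≤ ρ u v := by
  rcases le_max_iff.mp (hv.trans (hult v w u)) with h | h
  · rwa [hsymm]
  · exact absurd (hu.trans_le h) (lt_irrefl _)

section PathEmbedding

variable {U : Type*} (ρ : U → U → ℝ) (f : ℕ → U) (G : ℕ → ℝ)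

def NonContractiveOn (s : Finset ℕ) : Prop :=
  ∀ x ∈ s, ∀ y ∈ s, |(x : ℝ) - y| ≤ ρ (f x) (f y)

def IsGradientBoundOn (s : Finset ℕ) : Prop :=
  ∀ x ∈ s, ∀ y ∈ s, x ≠ y → ρ (f x) (f y) / |(x : ℝ) - y| ≤ G x

variable {ρ f G}

lemma NonContractiveOn.mono {s t : Finset ℕ} (h : NonContractiveOn ρ f t) (hst : s ⊆ t) :
    NonContractiveOn ρ f s :=
  fun x hx y hy => h x (hst hx) y (hst hy)

lemma IsGradientBoundOn.mono {s t : Finset ℕ} (h : IsGradientBoundOn ρ f G t) (hst : s ⊆ t) :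
    IsGradientBoundOn ρ f G s :=
  fun x hx y hy => h x (hst hx) y (hst hy)

lemma IsGradientBoundOn.div_le {s : Finset ℕ} (hG : IsGradientBoundOn ρ f G s) {x z m : ℕ}
    (hx : x ∈ s) (hz : z ∈ s) (hxz : x ≠ z) {r : ℝ} (hr0 : 0 ≤ r) (hr : r ≤ ρ (f x) (f z))
    (hm₁ : x ≤ z + m) (hm₂ : z ≤ x + m) : r / m ≤ G x := by
  have hd : 0 < |(x : ℝ) - z| := abs_pos.mpr (sub_ne_zero.mpr (Nat.cast_injective.ne hxz))
  have h₁ : (x : ℝ) ≤ z + m := by exact_mod_cast hm₁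
  have h₂ : (z : ℝ) ≤ x + m := by exact_mod_cast hm₂
  have hdm : |(x : ℝ) - z| ≤ m := abs_sub_le_iff.mpr ⟨by linarith, by linarith⟩
  calc r / m ≤ r / |(x : ℝ) - z| := div_le_div_of_nonneg_left hr0 hd hdm
    _ ≤ ρ (f x) (f z) / |(x : ℝ) - z| := div_le_div_of_nonneg_right hr hd.le
    _ ≤ G x := hG x hx z hz hxz

variable (hzero : ∀ u, ρ u u = 0) (hsymm : ∀ u v, ρ u v = ρ v u) (hult : IsUltrametric ρ)
include hzero hsymm hult

lemma exists_cut_div_succ_le {lo n : ℕ} (hn : 2 ≤ n) (hf : NonContractiveOn ρ f (Ico lo (lo + n)))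
    (hG : IsGradientBoundOn ρ f G (Ico lo (lo + n))) :
    ∃ a, lo < a ∧ a < lo + n ∧
      (∀ k < a - lo, (n - 1 : ℝ) / (k + 1) ≤ G (a - 1 - k)) ∧
      ∀ k < lo + n - a, (n - 1 : ℝ) / (k + 1) ≤ G (a + k) := by
  classical
  have hr : (1 : ℝ) ≤ n - 1 := by
    have : (2 : ℝ) ≤ n := by exact_mod_cast hn
    linarith
  have hends : (n - 1 : ℝ) ≤ ρ (f (lo + n - 1)) (f lo) := by
    have h := hf (lo + n - 1) (by simp; omega) lo (by simp; omega)
    have hd : ((lo + n - 1 : ℕ) : ℝ) - lo = n - 1 := by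
      push_cast [Nat.cast_sub (show 1 ≤ lo + n by omega)]; ring
    rwa [hd, abs_of_nonneg (by linarith)] at h
  have hex : ∃ a, lo ≤ a ∧ (n - 1 : ℝ) ≤ ρ (f a) (f lo) := ⟨lo + n - 1, by omega, hends⟩
  obtain ⟨hlo, ha⟩ := Nat.find_spec hex
  set a := Nat.find hex
  have hbefore : ∀ x, lo ≤ x → x < a → ρ (f x) (f lo) < n - 1 :=
    fun x h₁ h₂ => lt_of_not_ge fun h => Nat.find_min hex h₂ ⟨h₁, h⟩
  have hlo_a : lo < a := by
    refine lt_of_le_of_ne hlo fun h => ?_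
    rw [← h, hzero] at ha
    linarith
  have ha_hi : a < lo + n := (Nat.find_min' hex ⟨by omega, hends⟩).trans_lt (by omega)
  have hmem : ∀ x, lo ≤ x → x < lo + n → x ∈ Ico lo (lo + n) :=
    fun x h₁ h₂ => mem_Ico.mpr ⟨h₁, h₂⟩
  have hr0 : (0 : ℝ) ≤ n - 1 := by linarith
  refine ⟨a, hlo_a, ha_hi, fun k hk => ?_, fun k hk => ?_⟩
  · have hfar := hult.le_of_lt_of_le hsymm (hbefore (a - 1 - k) (by omega) (by omega)) ha
    have := hG.div_le (m := k + 1) (hmem _ (by omega) (by omega)) (hmem a hlo ha_hi) (by omega)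
      hr0 hfar (by omega) (by omega)
    exact_mod_cast this
  · by_cases hx : (n - 1 : ℝ) ≤ ρ (f (a + k)) (f lo)
    · have hfar := hult.le_of_lt_of_le hsymm (hbefore (a - 1) (by omega) (by omega)) hx
      rw [hsymm] at hfar
      have := hG.div_le (m := k + 1) (hmem _ (by omega) (by omega))
        (hmem (a - 1) (by omega) (by omega)) (by omega) hr0 hfar (by omega) (by omega)
      exact_mod_cast this
    · have hk0 : k ≠ 0 := by rintro rfl; exact hx ha
      have hfar := hult.le_of_lt_of_le hsymm (not_le.mp hx) ha
      have := hG.div_le (m := k + 1) (hmem _ (by omega) (by omega)) (hmem a hlo ha_hi)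
        (by omega) hr0 hfar (by omega) (by omega)
      exact_mod_cast this

theorem mul_log_sq_div_le_sum_Ico (n lo : ℕ) (hf : NonContractiveOn ρ f (Ico lo (lo + n)))
    (hG : IsGradientBoundOn ρ f G (Ico lo (lo + n))) (hG0 : ∀ x ∈ Ico lo (lo + n), 0 ≤ G x) :
    n * log n ^ 2 / 64 ≤ ∑ x ∈ Ico lo (lo + n), G x := by
  induction n using Nat.strong_induction_on generalizing lo with
  | _ n ih =>
  rcases lt_or_ge n 2 with hn | hn
  · interval_cases n
    · simp
    · simpa using hG0 lo (by simp)
  obtain ⟨a, hlo_a, ha_hi, hleft, hright⟩ := exists_cut_div_succ_le hzero hsymm hult hn hf hG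
  obtain ⟨s₁, t₁, hst₁, h₁⟩ :=
    exists_add_eq_mul_log_sq_le hn (L := a - lo) (by omega) (by omega)
  obtain ⟨s₂, t₂, hst₂, h₂⟩ :=
    exists_add_eq_mul_log_sq_le hn (L := lo + n - a) (by omega) (by omega)
  have hsplit : (n : ℝ) * log n ^ 2 / 64 =
      ((a - lo : ℕ) : ℝ) * log n ^ 2 / 64 + ((lo + n - a : ℕ) : ℝ) * log n ^ 2 / 64 := by
    rw [← add_div, ← add_mul, ← Nat.cast_add, show a - lo + (lo + n - a) = n by omega]
  obtain rfl : a = lo + t₁ + s₁ := by omega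
  have hend : lo + n = lo + t₁ + s₁ + s₂ + t₂ := by omega
  have hsub₁ : Ico lo (lo + t₁) ⊆ Ico lo (lo + n) := Ico_subset_Ico le_rfl (by omega)
  have hsub₂ : Ico (lo + t₁ + s₁ + s₂) (lo + t₁ + s₁ + s₂ + t₂) ⊆ Ico lo (lo + n) :=
    Ico_subset_Ico (by omega) (by omega)
  have hrec₁ := ih t₁ (by omega) lo (hf.mono hsub₁) (hG.mono hsub₁) fun x hx => hG0 x (hsub₁ hx)
  have hrec₂ := ih t₂ (by omega) _ (hf.mono hsub₂) (hG.mono hsub₂) fun x hx => hG0 x (hsub₂ hx)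
  have hcut₁ := mul_log_add_one_le_sum_Ico_left (b := lo + t₁) (s := s₁)
    (by simp only [sub_nonneg, Nat.one_le_cast]; omega) fun k hk => hleft k (by omega)
  have hcut₂ := mul_log_add_one_le_sum_Ico_right (a := lo + t₁ + s₁) (s := s₂)
    (by simp only [sub_nonneg, Nat.one_le_cast]; omega) fun k hk => hright k (by omega)
  rw [hend, ← sum_Ico_consecutive _ (by omega : lo ≤ lo + t₁ + s₁ + s₂) (by omega),
    ← sum_Ico_consecutive _ (by omega : lo ≤ lo + t₁ + s₁) (by omega),
    ← sum_Ico_consecutive _ (by omega : lo ≤ lo + t₁) (by omega)]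
  linarith

theorem mul_log_sq_div_le_sum_fin {n : ℕ} (f : Fin n → U) (G : Fin n → ℝ)
    (hf : ∀ a b : Fin n, |(a : ℝ) - b| ≤ ρ (f a) (f b))
    (hG : ∀ a b : Fin n, a ≠ b → ρ (f a) (f b) / |(a : ℝ) - b| ≤ G a) (hG0 : ∀ a, 0 ≤ G a) :
    n * log n ^ 2 / 64 ≤ ∑ a, G a := by
  rcases Nat.eq_zero_or_pos n with rfl | hn
  · simp
  let F : ℕ → U := Function.extend Fin.val f fun _ => f ⟨0, hn⟩
  let G' : ℕ → ℝ := Function.extend Fin.val G 0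
  have hF (a : Fin n) : F a = f a := Fin.val_injective.extend_apply _ _ a
  have hG' (a : Fin n) : G' a = G a := Fin.val_injective.extend_apply _ _ a
  have hfin : ∀ x ∈ Ico 0 (0 + n), ∃ a : Fin n, (a : ℕ) = x :=
    fun x hx => ⟨⟨x, by simpa using hx⟩, rfl⟩
  have key := mul_log_sq_div_le_sum_Ico hzero hsymm hult n 0 (f := F) (G := G')
    (fun x hx y hy => by
      obtain ⟨a, rfl⟩ := hfin x hx
      obtain ⟨b, rfl⟩ := hfin y hy
      simpa only [hF] using hf a b)
    (fun x hx y hy hxy => by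
      obtain ⟨a, rfl⟩ := hfin x hx
      obtain ⟨b, rfl⟩ := hfin y hy
      simpa only [hF, hG'] using hG a b fun h => hxy (h ▸ rfl))
    (fun x hx => by
      obtain ⟨a, rfl⟩ := hfin x hx
      simpa only [hG'] using hG0 a)
  rwa [zero_add, ← range_eq_Ico, ← Fin.sum_univ_eq_sum_range, sum_congr rfl fun a _ => hG' a] at key

end PathEmbedding

/-- There is a universal `c > 0` such that for every `n ≥ 2`, every non-contractive map
of the path `{0,…,n−1}` (with metric `|i−j|`) into a finite ultrametric space satisfies
`(1/n) ∑_x |∇f(x)|_∞ ≥ c (log n)²`. -/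
theorem path_ultrametric_gradient_average_lower_bound :
    ∃ c : ℝ, 0 < c ∧
      ∀ (n : ℕ), 2 ≤ n →
        ∀ (U : Type), Finite U →
          ∀ (dU : U → U → ℝ), IsMetric dU → IsUltrametric dU →
            ∀ f : Fin n → U,
              (∀ a b : Fin n, |(a : ℝ) - (b : ℝ)| ≤ dU (f a) (f b)) →
              c * (Real.log n) ^ 2 ≤
                (1 / (n : ℝ)) * ∑ x : Fin n,
                  (⨆ y : {y : Fin n // y ≠ x},
                    dU (f x) (f y.1) / |(x : ℝ) - (y.1 : ℝ)|) := by
  refine ⟨1 / 64, by norm_num, fun n _ U _ dU hmet hult f hf => ?_⟩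
  obtain ⟨hnonneg, hzero, hsymm, -⟩ := hmet
  have key := mul_log_sq_div_le_sum_fin (fun u => (hzero u u).mpr rfl) hsymm hult f _ hf
    (fun a b hab => le_ciSup (f := fun y : {y : Fin n // y ≠ a} =>
      dU (f a) (f y.1) / |(a : ℝ) - (y.1 : ℝ)|) (Set.finite_range _).bddAbove ⟨b, hab.symm⟩)
    (fun a => Real.iSup_nonneg fun _ => div_nonneg (hnonneg _ _) (abs_nonneg _))
  calc 1 / 64 * log n ^ 2 = 1 / n * (n * log n ^ 2 / 64) := by field_simp
    _ ≤ _ := by gcongr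
end

section
/- For all real numbers a, b ≥ 1: a·(log a)² + b·(log b)² ≥ (a+b)·(log(a+b))² − 2·[1 + log((a+b)/a)]·a·log(a+b). (Here log denotes the natural logarithm; the paper states this for nonnegative integers a, b with the convention 0·(log 0)² = 0, the cases a = 0 or b = 0 being trivial.) -/
open Real

/-!
Writing `L = log (a + b)`, `A = log a`, `B = log b`, the inequality rearranges to
`b (L² - B²) ≤ 2 a L + a (L - A)²`. Since `log x ≤ x - 1` gives `b (L - B) ≤ a`, and `B ≤ L`,
we get `b (L² - B²) = b (L - B)(L + B) ≤ a (L + B) ≤ 2 a L`.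
-/

lemma mul_log_add_sub_log_le {a b : ℝ} (ha : 0 ≤ a) (hb : 0 < b) :
    b * (log (a + b) - log b) ≤ a := by
  have hlog : log ((a + b) / b) ≤ (a + b) / b - 1 := log_le_sub_one_of_pos (by positivity)
  rw [log_div (by positivity) hb.ne'] at hlog
  calc b * (log (a + b) - log b) ≤ b * ((a + b) / b - 1) := by gcongr
    _ = a := by field_simp; ring

lemma mul_sub_sq_log_le {a b : ℝ} (ha : 0 ≤ a) (hb : 1 ≤ b) :
    b * (log (a + b) ^ 2 - log b ^ 2) ≤ 2 * a * log (a + b) := by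
  have hb0 : 0 < b := by linarith
  have hB : 0 ≤ log b := log_nonneg hb
  have hBL : log b ≤ log (a + b) := log_le_log hb0 (by linarith)
  calc b * (log (a + b) ^ 2 - log b ^ 2)
        = b * (log (a + b) - log b) * (log (a + b) + log b) := by ring
    _ ≤ a * (log (a + b) + log b) :=
        mul_le_mul_of_nonneg_right (mul_log_add_sub_log_le ha hb0) (by linarith)
    _ ≤ 2 * a * log (a + b) := by linarith [mul_nonneg ha (sub_nonneg.2 hBL)]

/-- First numerical inequality of Lemma 3.3: for `a, b ≥ 1`,
`a(log a)² + b(log b)² ≥ (a+b)(log(a+b))² − 2[1 + log((a+b)/a)]·a·log(a+b)`. -/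
theorem numerical_inequality_one (a b : ℝ) (ha : 1 ≤ a) (hb : 1 ≤ b) :
    a * (Real.log a) ^ 2 + b * (Real.log b) ^ 2 ≥
      (a + b) * (Real.log (a + b)) ^ 2 -
        2 * (1 + Real.log ((a + b) / a)) * a * Real.log (a + b) := by
  have ha0 : 0 < a := by linarith
  rw [log_div (by linarith) ha0.ne']
  have hsq : 0 ≤ a * (log (a + b) - log a) ^ 2 := by positivity
  linarith [mul_sub_sq_log_le ha0.le hb]
end

section
/- Fix p ≥ 1 and n ≥ 1. Let a_1 ≥ a_2 ≥ ... ≥ a_n ≥ 0 and b_1, ..., b_n ≥ 0 be real numbers. Then Σ_{j=1}^n (a_j^p + b_j^p)^{1/p} ≥ Σ_{j=2}^n a_j + (a_1^p + Σ_{j=1}^n b_j^p)^{1/p}. -/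
/-!
Write `r = 1/p ∈ (0, 1]` and induct on `n`. By concavity of `t ↦ t ^ r` on `[0, ∞)`, its increments
shrink as the base point grows: `(C + y) ^ r - C ^ r ≤ (D + y) ^ r - D ^ r` for `0 ≤ D ≤ C`, `y ≥ 0`.
Appending a coordinate `(aₙ, bₙ)` raises the right-hand side by `aₙ + (C + y) ^ r - C ^ r`, where
`C = a₀ᵖ + ∑_{j<n} bⱼᵖ` and `y = bₙᵖ`, and the left-hand side by `(aₙᵖ + bₙᵖ) ^ r`, which is
`aₙ + (D + y) ^ r - D ^ r` for `D = aₙᵖ ≤ C`.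
-/

open Finset

theorem ConcaveOn.map_add_sub_map_le_of_le {𝕜 : Type*} [Field 𝕜] [LinearOrder 𝕜]
    [IsStrictOrderedRing 𝕜] {s : Set 𝕜} {f : 𝕜 → 𝕜} (hf : ConcaveOn 𝕜 s f) {x y d : 𝕜}
    (hx : x ∈ s) (hyd : y + d ∈ s) (hxy : x ≤ y) (hd : 0 ≤ d) :
    f (y + d) - f y ≤ f (x + d) - f x := by
  rcases hxy.eq_or_lt with rfl | hxy
  · exact le_rfl
  -- `y` and `x + d` are the two convex combinations of `x` and `y + d` with weights `d/L`, `(y-x)/L`.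
  set L := y + d - x
  have hL : 0 < L := by linarith
  have hweights : d / L + (y - x) / L = 1 := by field_simp; ring
  have hy := hf.2 hx hyd (div_nonneg hd hL.le) (div_nonneg (sub_nonneg.2 hxy.le) hL.le) hweights
  have hxd := hf.2 hx hyd (div_nonneg (sub_nonneg.2 hxy.le) hL.le) (div_nonneg hd hL.le)
    ((add_comm _ _).trans hweights)
  simp only [smul_eq_mul] at hy hxd
  have hy_eq : d / L * x + (y - x) / L * (y + d) = y := by field_simp; ring
  have hxd_eq : (y - x) / L * x + d / L * (y + d) = x + d := by field_simp; ring
  rw [hy_eq] at hy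
  rw [hxd_eq] at hxd
  linear_combination hy + hxd - (f x + f (y + d)) * hweights

theorem Real.add_rpow_sub_rpow_le_of_le {r C D y : ℝ} (hr₀ : 0 ≤ r) (hr₁ : r ≤ 1) (hD : 0 ≤ D)
    (hDC : D ≤ C) (hy : 0 ≤ y) : (C + y) ^ r - C ^ r ≤ (D + y) ^ r - D ^ r :=
  (Real.concaveOn_rpow hr₀ hr₁).map_add_sub_map_le_of_le hD (Set.mem_Ici.2 (by linarith)) hDC hy

theorem sum_succ_add_rpow_le_sum_rpow {p : ℝ} (hp : 1 ≤ p) {m : ℕ} (a b : Fin (m + 1) → ℝ)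
    (ha : ∀ j, 0 ≤ a j) (ha_le : ∀ j, a j ≤ a 0) (hb : ∀ j, 0 ≤ b j) :
    ∑ j : Fin m, a j.succ + (a 0 ^ p + ∑ j, b j ^ p) ^ (1 / p) ≤
      ∑ j, (a j ^ p + b j ^ p) ^ (1 / p) := by
  induction m with
  | zero => simp
  | succ m ih =>
    have hp₀ : 0 < p := by linarith
    have ih := ih (a ∘ Fin.castSucc) (b ∘ Fin.castSucc) (fun j => ha _) (fun j => ha_le _)
      (fun j => hb _)
    simp only [Function.comp_apply, Fin.castSucc_zero] at ih
    set C := a 0 ^ p + ∑ j : Fin (m + 1), b j.castSucc ^ p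
    have hlast : (a (Fin.last _) ^ p) ^ (1 / p) = a (Fin.last _) := by
      rw [← Real.rpow_mul (ha _), mul_one_div_cancel hp₀.ne', Real.rpow_one]
    have hinc := Real.add_rpow_sub_rpow_le_of_le (C := C) (D := a (Fin.last _) ^ p)
      (y := b (Fin.last _) ^ p)
      (by positivity : 0 ≤ 1 / p) ((div_le_one hp₀).2 hp) (Real.rpow_nonneg (ha _) p)
      (le_add_of_le_of_nonneg (Real.rpow_le_rpow (ha _) (ha_le _) hp₀.le)
        (sum_nonneg fun j _ => Real.rpow_nonneg (hb _) p))
      (Real.rpow_nonneg (hb _) p)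
    rw [hlast] at hinc
    rw [Fin.sum_univ_castSucc (fun j => a j.succ), Fin.sum_univ_castSucc (fun j => b j ^ p),
      Fin.sum_univ_castSucc (fun j => (a j ^ p + b j ^ p) ^ (1 / p))]
    simp only [Fin.succ_castSucc, Fin.succ_last, ← add_assoc]
    linarith

/-- Lemma 4.2 (ℓ_p-sum inequality): if `p ≥ 1`, `a 0 ≥ a 1 ≥ ⋯ ≥ a (n−1) ≥ 0` and
`b j ≥ 0`, then `∑ⱼ (aⱼᵖ + bⱼᵖ)^{1/p} ≥ ∑_{j ≥ 1} aⱼ + (a₀ᵖ + ∑ⱼ bⱼᵖ)^{1/p}`. -/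
theorem lp_sum_inequality
    (p : ℝ) (hp : 1 ≤ p) (n : ℕ) (hn : 1 ≤ n)
    (a b : Fin n → ℝ)
    (ha_nonneg : ∀ j, 0 ≤ a j)
    (ha_mono : ∀ i j : Fin n, i ≤ j → a j ≤ a i)
    (hb : ∀ j, 0 ≤ b j) :
    ∑ j, (a j ^ p + b j ^ p) ^ (1 / p) ≥
      (∑ j ∈ Finset.univ.erase (⟨0, by omega⟩ : Fin n), a j) +
        (a ⟨0, by omega⟩ ^ p + ∑ j, b j ^ p) ^ (1 / p) := by
  obtain ⟨m, rfl⟩ : ∃ m, n = m + 1 := ⟨n - 1, by omega⟩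
  have herase : ∑ j ∈ univ.erase (0 : Fin (m + 1)), a j = ∑ j : Fin m, a j.succ := by
    rw [← add_right_inj (a 0), add_sum_erase _ _ (mem_univ _), Fin.sum_univ_succ]
  exact (herase ▸ sum_succ_add_rpow_le_sum_rpow hp a b ha_nonneg
    (fun j => ha_mono 0 j (Fin.zero_le j)) hb)
end

section
/- Fix p > 1 and n > 3, and let C_n denote Z/nZ with the cycle metric. Let D be any finitely supported probability distribution over pairs (T, f) where (T, d_T) is a finite metric space satisfying the four-point condition and f : C_n → T is non-contractive. Then max_{x ∈ Z/nZ} E_D[ |∇f(x)|_∞^p ] ≥ n^{p−1} / 12^p, where |∇f(x)|_∞ = max_{y ≠ x} d_T(f(x),f(y))/d_{C_n}(x,y). Consequently, no probabilistic embedding into trees can have polylogarithmic expected p-th power of the maximum gradient for p > 1. -/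
/-- `ρ` satisfies the four-point condition (tree metric). -/
def FourPointCond {X : Type*} (ρ : X → X → ℝ) : Prop :=
  ∀ w x y z, ρ w x + ρ y z ≤ max (ρ w y + ρ x z) (ρ w z + ρ x y)

/-- The shortest-path metric of the unweighted `n`-cycle on `ZMod n`. -/
def cycleDist (n : ℕ) (i j : ZMod n) : ℝ := (min (i - j).val (j - i).val : ℕ)


lemma cycleDist_adj (n : ℕ) (hn : 1 < n) (x : ZMod n) : cycleDist n x (x+1) = 1 := by
  haveI : NeZero n := ⟨by omega⟩
  haveI : Fact (1 < n) := ⟨hn⟩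
  unfold cycleDist
  have h1 : (x - (x+1)) = -1 := by ring
  have h2 : (x + 1 - x) = 1 := by ring
  rw [h1, h2]
  have hv1 : (1 : ZMod n).val = 1 := ZMod.val_one n
  have hneg : (-1 : ZMod n).val = n - 1 := by
    have e1 : (-1 : ZMod n) = ((n - 1 : ℕ) : ZMod n) := by
      rw [Nat.cast_sub (by omega), ZMod.natCast_self, Nat.cast_one]; ring
    rw [e1, ZMod.val_natCast, Nat.mod_eq_of_lt (by omega)]
  rw [hv1, hneg]
  have : min (n-1) 1 = 1 := by omega
  rw [this, Nat.cast_one]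

lemma cycleDist_cast_ge (n : ℕ) (hn : 0 < n) (i j : ℕ) (hij : i ≤ j) (hjn : j ≤ n) :
    ((min (j - i) (n - (j - i)) : ℕ) : ℝ) ≤ cycleDist n (i : ZMod n) (j : ZMod n) := by
  haveI : NeZero n := ⟨hn.ne'⟩
  unfold cycleDist
  set e := j - i with he
  have hj : (j : ZMod n) = (i : ZMod n) + (e : ZMod n) := by
    rw [show j = i + e by omega]; push_cast; ring
  have h1 : ((j : ZMod n) - (i : ZMod n)) = ((e : ℕ) : ZMod n) := by rw [hj]; ring
  have h2 : ((i : ZMod n) - (j : ZMod n)) = ((n - e : ℕ) : ZMod n) := by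
    rw [hj, Nat.cast_sub (by omega : e ≤ n), ZMod.natCast_self]; ring
  rw [h1, h2, ZMod.val_natCast, ZMod.val_natCast]
  have key : min e (n - e) ≤ min ((n - e) % n) (e % n) := by
    rcases Nat.lt_or_ge e n with hlt | hge
    · rw [Nat.mod_eq_of_lt hlt]
      rcases Nat.eq_zero_or_pos e with h0 | h0
      · simp [h0]
      · rw [Nat.mod_eq_of_lt (by omega : n - e < n)]; omega
    · have he' : e = n := by omega
      have : min e (n - e) = 0 := by omega
      rw [this]; exact Nat.zero_le _
  exact_mod_cast key

lemma hyp_ineq {X : Type*} (ρ : X → X → ℝ) (h4 : FourPointCond ρ)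
    (hs : ∀ a b, ρ a b = ρ b a) (w a b c : X) :
    min (ρ w a + ρ w b - ρ a b) (ρ w b + ρ w c - ρ b c) ≤ ρ w a + ρ w c - ρ a c := by
  rcases le_max_iff.1 (h4 w b a c) with h | h
  · exact min_le_iff.2 (Or.inr (by linarith))
  · exact min_le_iff.2 (Or.inl (by linarith [hs a b, hs b a]))

lemma lemA {X : Type*} (ρ : X → X → ℝ) (h4 : FourPointCond ρ)
    (hs : ∀ a b, ρ a b = ρ b a) (x y u v : X)
    (hgt : ρ x y + ρ x v - ρ y v < ρ x y + ρ x u - ρ y u) :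
    ((ρ x y + ρ x u - ρ y u) - (ρ x y + ρ x v - ρ y v))
      + (ρ u x + ρ u y - ρ x y) + (ρ v x + ρ v y - ρ x y) ≤ 2 * ρ u v := by
  rcases le_max_iff.1 (h4 u x v y) with h | h
  · linarith [hs u x, hs v y, hs x u, hs y v, hs u y, hs x v]
  · exfalso
    linarith [hs u x, hs v y, hs x u, hs y v, hs u y, hs x v]

lemma chain_lemma {X : Type*} (ρ : X → X → ℝ) (h4 : FourPointCond ρ)
    (hs : ∀ a b, ρ a b = ρ b a) (h0 : ∀ a, ρ a a = 0)
    (htri : ∀ a b c, ρ a c ≤ ρ a b + ρ b c)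
    (x y : X) (c : ℕ → X) (k : ℕ) (hc0 : c 0 = x)
    (M τ : ℝ) (hM : 0 ≤ M) (hτ : 0 ≤ τ)
    (hstep : ∀ j, j < k → ρ (c j) (c (j+1)) ≤ M)
    (hend : τ ≤ ρ x y + ρ x (c k) - ρ y (c k)) :
    ∃ j, j ≤ k ∧ ρ x y + ρ x (c j) - ρ y (c j) ≤ τ ∧
      (ρ (c j) x + ρ (c j) y - ρ x y) + (τ - (ρ x y + ρ x (c j) - ρ y (c j))) ≤ 2 * M := by
  classical
  rcases eq_or_lt_of_le hτ with heq | hpos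
  · refine ⟨0, Nat.zero_le k, ?_, ?_⟩ <;>
    · rw [hc0]
      have := h0 x
      have := hs x y
      linarith
  · set P : ℕ → Prop := fun j => ρ x y + ρ x (c j) - ρ y (c j) < τ with hP
    have hP0 : P 0 := by
      rw [hP]
      simp only [hc0]
      have := h0 x
      have := hs x y
      linarith
    set j₀ := Nat.findGreatest P k with hj₀
    have hspec : P j₀ := Nat.findGreatest_spec (Nat.zero_le k) hP0
    have hle : j₀ ≤ k := Nat.findGreatest_le k
    have hlt : j₀ < k := by
      rcases lt_or_eq_of_le hle with h | h
      · exact h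
      · exfalso
        rw [h] at hspec
        rw [hP] at hspec
        linarith
    have hnot : ¬ P (j₀ + 1) := Nat.findGreatest_is_greatest (Nat.lt_succ_self j₀) (by omega)
    rw [hP] at hspec hnot
    have hA := lemA ρ h4 hs x y (c (j₀ + 1)) (c j₀) (lt_of_lt_of_le hspec (not_lt.mp hnot))
    have hHpos : 0 ≤ ρ (c (j₀+1)) x + ρ (c (j₀+1)) y - ρ x y := by
      have := htri x (c (j₀+1)) y
      have := hs x (c (j₀+1))
      linarith
    have hstepj := hstep j₀ hlt
    have hsym := hs (c (j₀+1)) (c j₀)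
    exact ⟨j₀, le_of_lt hlt, le_of_lt hspec, by linarith⟩

lemma pair_lemma {X : Type*} (ρ : X → X → ℝ) (h4 : FourPointCond ρ)
    (hs : ∀ a b, ρ a b = ρ b a) (x y z u v : X) (M1 M2 : ℝ)
    (hu1 : ρ x y + ρ x u - ρ y u ≤ ρ x y + ρ x z - ρ y z)
    (hu2 : (ρ u x + ρ u y - ρ x y)
      + ((ρ x y + ρ x z - ρ y z) - (ρ x y + ρ x u - ρ y u)) ≤ 2 * M1)
    (hv1 : ρ y z + ρ y v - ρ z v ≤ ρ y z + ρ y x - ρ z x)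
    (hv2 : (ρ v y + ρ v z - ρ y z)
      + ((ρ y z + ρ y x - ρ z x) - (ρ y z + ρ y v - ρ z v)) ≤ 2 * M2) :
    ρ u v ≤ M1 + M2 := by
  have A1 := hyp_ineq ρ h4 hs y u x v
  have A2 := hyp_ineq ρ h4 hs y x z v
  have k1 : ρ y z + ρ y v - ρ z v ≤ ρ y x + ρ y v - ρ x v :=
    le_trans (le_min (by linarith [hs z x, hs x z]) (le_refl _)) A2
  have k2 : ρ y z + ρ y v - ρ z v ≤ ρ y u + ρ y x - ρ u x := by
    linarith [hu1, hv1, hs x u, hs x z, hs u x, hs z x]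
  have hQ : ρ y z + ρ y v - ρ z v ≤ ρ y u + ρ y v - ρ u v :=
    le_trans (le_min k2 k1) A1
  linarith [hQ, hu2, hv2, hu1, hv1, hs x y, hs x u, hs y u, hs x z, hs y z,
    hs y v, hs z v, hs x v, hs u v]

lemma min_filter {u v c : ℝ} (h : min u v ≤ c) (hv : c < v) : u ≤ c := by
  rcases min_cases u v with ⟨h1, h2⟩ | ⟨h1, h2⟩ <;> linarith

lemma rr_lemma (n : ℕ) (hn : 3 < n) (ρ : ZMod n → ZMod n → ℝ)
    (hs : ∀ a b, ρ a b = ρ b a) (htri : ∀ a b c, ρ a c ≤ ρ a b + ρ b c)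
    (h0 : ∀ a, ρ a a = 0) (h4 : FourPointCond ρ)
    (hdom : ∀ a b, cycleDist n a b ≤ ρ a b) :
    ∃ j : ZMod n, (n : ℝ) / 12 ≤ ρ j (j + 1) := by
  haveI : NeZero n := ⟨by omega⟩
  have hedge : ∀ x : ZMod n, (1 : ℝ) ≤ ρ x (x + 1) := fun x => by
    have := hdom x (x + 1)
    rwa [cycleDist_adj n (by omega) x] at this
  by_cases hsmall : n ≤ 12
  · refine ⟨0, le_trans ?_ (hedge 0)⟩
    rw [div_le_one (by norm_num)]
    exact_mod_cast hsmall
  push_neg at hsmall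
  by_contra hcon
  push_neg at hcon
  set M : ℝ := (n : ℝ) / 12 with hM
  have hMpos : 0 < M := by positivity
  have hstepN : ∀ m : ℕ, ρ (m : ZMod n) ((m + 1 : ℕ) : ZMod n) ≤ M := by
    intro m
    rw [show ((m + 1 : ℕ) : ZMod n) = (m : ZMod n) + 1 by push_cast; ring]
    exact (hcon (m : ZMod n)).le
  set a : ℕ := n / 3 with ha
  have ha3 : 3 * a ≤ n := by omega
  have ha2 : n ≤ 3 * a + 2 := by omega
  have hapos : 4 ≤ a := by omega
  set x : ZMod n := ((0 : ℕ) : ZMod n) with hx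
  set y : ZMod n := ((a : ℕ) : ZMod n) with hy
  set z : ZMod n := ((a + a : ℕ) : ZMod n) with hz
  -- chain 1 : from x to y
  obtain ⟨j1, hj1k, hG1, hH1⟩ := chain_lemma ρ h4 hs h0 htri x y
    (fun j => ((j : ℕ) : ZMod n)) a rfl M (ρ x y + ρ x z - ρ y z) hMpos.le
    (by linarith [htri y x z, hs x y])
    (fun j _ => hstepN j)
    (by
      show _ ≤ ρ x y + ρ x y - ρ y y
      have := h0 y
      have := htri x y z
      linarith)
  -- chain 2 : from y to z
  obtain ⟨j2, hj2k, hG2, hH2⟩ := chain_lemma ρ h4 hs h0 htri y z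
    (fun j => ((a + j : ℕ) : ZMod n)) a rfl M (ρ y z + ρ y x - ρ z x) hMpos.le
    (by linarith [htri z y x, hs y z])
    (fun j _ => hstepN (a + j))
    (by
      show _ ≤ ρ y z + ρ y z - ρ z z
      have := h0 z
      have := htri y z x
      linarith)
  -- chain 3 : from z to x
  have hc3end : ((a + a + (n - (a + a)) : ℕ) : ZMod n) = x := by
    rw [show a + a + (n - (a + a)) = n by omega, ZMod.natCast_self, hx, Nat.cast_zero]
  obtain ⟨j3, hj3k, hG3, hH3⟩ := chain_lemma ρ h4 hs h0 htri z x
    (fun j => ((a + a + j : ℕ) : ZMod n)) (n - (a + a)) rfl M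
    (ρ z x + ρ z y - ρ x y) hMpos.le
    (by linarith [htri x z y, hs z x])
    (fun j _ => hstepN (a + a + j))
    (by
      show _ ≤ ρ z x + ρ z (((a + a + (n - (a + a))) : ℕ) : ZMod n)
        - ρ x (((a + a + (n - (a + a))) : ℕ) : ZMod n)
      rw [hc3end]
      have := h0 x
      have := htri z x y
      linarith)
  -- pair bounds
  have p12 : ρ ((j1 : ℕ) : ZMod n) ((a + j2 : ℕ) : ZMod n) ≤ M + M :=
    pair_lemma ρ h4 hs x y z _ _ M M hG1 hH1 hG2 hH2
  have p23 : ρ ((a + j2 : ℕ) : ZMod n) ((a + a + j3 : ℕ) : ZMod n) ≤ M + M :=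
    pair_lemma ρ h4 hs y z x _ _ M M hG2 hH2 hG3 hH3
  have p31 : ρ ((a + a + j3 : ℕ) : ZMod n) ((j1 : ℕ) : ZMod n) ≤ M + M :=
    pair_lemma ρ h4 hs z x y _ _ M M hG3 hH3 hG1 hH1
  -- cycle distance lower bounds
  have hd12 := le_trans (cycleDist_cast_ge n (by omega) j1 (a + j2)
    (by omega) (by omega)) (le_trans (hdom _ _) p12)
  have hd23 := le_trans (cycleDist_cast_ge n (by omega) (a + j2) (a + a + j3)
    (by omega) (by omega)) (le_trans (hdom _ _) p23)
  have p31' : ρ ((j1 : ℕ) : ZMod n) ((a + a + j3 : ℕ) : ZMod n) ≤ M + M := by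
    rw [hs ((j1 : ℕ) : ZMod n) ((a + a + j3 : ℕ) : ZMod n)]; exact p31
  have hd31 := le_trans (cycleDist_cast_ge n (by omega) j1 (a + a + j3)
    (by omega) (by omega)) (le_trans (hdom _ _) p31')
  -- arithmetic contradiction
  set A : ℕ := a + j2 - j1 with hA
  set B : ℕ := a + a + j3 - (a + j2) with hB
  set m13 : ℕ := a + a + j3 - j1 with hm13
  rw [Nat.cast_min] at hd12 hd23 hd31
  have hcast : ∀ u v : ℕ, v ≤ n → ((n - v : ℕ) : ℝ) = (n : ℝ) - (v : ℕ) := by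
    intro u v hv; push_cast [hv]; ring
  have hAn : A ≤ n := by omega
  have hBn : B ≤ n := by omega
  have hm13n : m13 ≤ n := by omega
  have h6a : (n : ℝ) / 6 < (a : ℝ) := by
    have h1 : (n : ℝ) ≤ 3 * (a : ℝ) + 2 := by exact_mod_cast ha2
    have hn13 : (13 : ℝ) ≤ (n : ℝ) := by exact_mod_cast (by omega : 13 ≤ n)
    linarith
  have hMM : M + M = (n : ℝ) / 6 := by rw [hM]; ring
  rw [hMM] at hd12 hd23 hd31
  have hAle : (A : ℝ) ≤ (n : ℝ) / 6 := by
    refine min_filter hd12 ?_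
    rw [hcast 0 A hAn]
    have : (A : ℝ) ≤ (a : ℝ) + (a : ℝ) := by exact_mod_cast (by omega : A ≤ a + a)
    have h3a : 3 * (a : ℝ) ≤ (n : ℝ) := by exact_mod_cast ha3
    linarith
  have hBle : (B : ℝ) ≤ (n : ℝ) / 6 := by
    refine min_filter hd23 ?_
    rw [hcast 0 B hBn]
    have : (B : ℝ) + (a : ℝ) ≤ (n : ℝ) := by
      exact_mod_cast (by omega : B + a ≤ n)
    linarith
  have hm13le : ((n - m13 : ℕ) : ℝ) ≤ (n : ℝ) / 6 := by
    rw [min_comm] at hd31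
    refine min_filter hd31 ?_
    have : (a : ℝ) ≤ (m13 : ℝ) := by exact_mod_cast (by omega : a ≤ m13)
    linarith
  have hsum : ((A : ℕ) : ℝ) + (B : ℝ) + ((n - m13 : ℕ) : ℝ) = (n : ℝ) := by
    exact_mod_cast (by omega : A + B + (n - m13) = n)
  have hn13 : (13 : ℝ) ≤ (n : ℝ) := by exact_mod_cast (by omega : 13 ≤ n)
  rw [hcast 0 m13 hm13n] at hm13le
  rw [hcast 0 m13 hm13n] at hsum
  linarith

/-- For `p > 1` and `n > 3`: for every finitely supported distribution over
non-contractive embeddings of the `n`-cycle into finite tree metrics, some point `x`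
satisfies `E[|∇f(x)|_∞ᵖ] ≥ n^{p−1}/12ᵖ`; in particular no probabilistic embedding into
trees has polylogarithmic expected `p`-th power of the maximum gradient. -/
theorem cycle_tree_pth_power_gradient_lower_bound
    (p : ℝ) (hp : 1 < p) (n : ℕ) (hn : 3 < n)
    (m : ℕ) (w : Fin m → ℝ) (T : Fin m → Type)
    (dT : ∀ i, T i → T i → ℝ) (f : ∀ i, ZMod n → T i)
    (hw : ∀ i, 0 ≤ w i) (hw1 : ∑ i, w i = 1)
    (hsupp : ∀ i, w i ≠ 0 →
      Finite (T i) ∧ IsMetric (dT i) ∧ FourPointCond (dT i) ∧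
      ∀ a b : ZMod n, cycleDist n a b ≤ dT i (f i a) (f i b)) :
    ∃ x : ZMod n,
      (n : ℝ) ^ (p - 1) / 12 ^ p ≤
        ∑ i, w i * (⨆ y : {y : ZMod n // y ≠ x},
          dT i (f i x) (f i y.1) / cycleDist n x y.1) ^ p := by
  classical
  haveI : NeZero n := ⟨by omega⟩
  haveI : Fact (1 < n) := ⟨by omega⟩
  have hnpos : (0:ℝ) < n := by exact_mod_cast (by omega : 0 < n)
  set G : Fin m → ZMod n → ℝ := fun i x =>
    (⨆ y : {y : ZMod n // y ≠ x}, dT i (f i x) (f i y.1) / cycleDist n x y.1) ^ p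
    with hGdef
  have hne : ∀ x : ZMod n, x + 1 ≠ x := by
    intro x h
    exact one_ne_zero (by rwa [add_eq_left] at h)
  have hsup_ge : ∀ i, w i ≠ 0 → ∀ x : ZMod n,
      dT i (f i x) (f i (x + 1)) ≤
        ⨆ y : {y : ZMod n // y ≠ x}, dT i (f i x) (f i y.1) / cycleDist n x y.1 := by
    intro i hi x
    have hB : BddAbove (Set.range fun y : {y : ZMod n // y ≠ x} =>
        dT i (f i x) (f i y.1) / cycleDist n x y.1) := (Set.finite_range _).bddAbove
    have hle := le_ciSup hB (⟨x + 1, hne x⟩ : {y : ZMod n // y ≠ x})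
    rwa [cycleDist_adj n (by omega) x, div_one] at hle
  have hGnonneg : ∀ i, w i ≠ 0 → ∀ x : ZMod n, 0 ≤ G i x := by
    intro i hi x
    obtain ⟨hfin, hmet, h4T, hdomT⟩ := hsupp i hi
    exact Real.rpow_nonneg (le_trans (hmet.1 _ _) (hsup_ge i hi x)) p
  have hkey : ∀ i, w i ≠ 0 → ∃ x : ZMod n, ((n:ℝ)/12)^p ≤ G i x := by
    intro i hi
    obtain ⟨hfin, hmet, h4T, hdomT⟩ := hsupp i hi
    obtain ⟨x0, hx0⟩ := rr_lemma n hn (fun a b => dT i (f i a) (f i b))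
      (fun a b => hmet.2.2.1 _ _) (fun a b c => hmet.2.2.2 _ _ _)
      (fun a => (hmet.2.1 _ _).2 rfl) (fun a b c d => h4T _ _ _ _) hdomT
    refine ⟨x0, Real.rpow_le_rpow (by positivity) ?_ (by linarith)⟩
    exact le_trans hx0 (hsup_ge i hi x0)
  -- main sum bound
  have hsum : ((n:ℝ)/12)^p ≤ ∑ x : ZMod n, ∑ i, w i * G i x := by
    rw [Finset.sum_comm]
    have h1 : ((n:ℝ)/12)^p = ∑ i, w i * ((n:ℝ)/12)^p := by
      rw [← Finset.sum_mul, hw1, one_mul]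
    rw [h1]
    refine Finset.sum_le_sum (fun i _ => ?_)
    by_cases hwi : w i = 0
    · simp [hwi]
    · calc w i * ((n:ℝ)/12)^p ≤ w i * G i (Classical.choose (hkey i hwi)) :=
            mul_le_mul_of_nonneg_left (Classical.choose_spec (hkey i hwi)) (hw i)
        _ ≤ ∑ x : ZMod n, w i * G i x :=
            Finset.single_le_sum
              (fun x _ => mul_nonneg (hw i) (hGnonneg i hwi x))
              (Finset.mem_univ _)
  by_contra hcon
  push_neg at hcon
  have hlt : ∑ x : ZMod n, ∑ i, w i * G i x
      < (n : ℝ) * ((n : ℝ) ^ (p - 1) / 12 ^ p) := by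
    have := Finset.sum_lt_sum_of_nonempty
      (s := (Finset.univ : Finset (ZMod n)))
      (f := fun x => ∑ i, w i * G i x)
      (g := fun _ => (n : ℝ) ^ (p - 1) / 12 ^ p)
      ⟨(0 : ZMod n), Finset.mem_univ _⟩ (fun x _ => hcon x)
    simpa [Finset.sum_const, Finset.card_univ, ZMod.card, nsmul_eq_mul] using this
  have heq : (n : ℝ) * ((n : ℝ) ^ (p - 1) / 12 ^ p) = ((n:ℝ)/12)^p := by
    rw [Real.div_rpow hnpos.le (by norm_num : (0:ℝ) ≤ 12)]
    have h2 : (n : ℝ) * (n : ℝ) ^ (p - 1) = (n : ℝ) ^ p := by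
      rw [show (n:ℝ) * (n:ℝ)^(p-1) = (n:ℝ)^(1:ℝ) * (n:ℝ)^(p-1) by rw [Real.rpow_one],
        ← Real.rpow_add hnpos]
      norm_num
    rw [← h2]; ring
  rw [heq] at hlt
  linarith
end
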